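/- arXiv:2509.14100 — 2 statements merged into one kernel-verified Lean document; each statement's English description precedes it below -/
import Mathlib

section
/- Letting s → 0 in the stationary functional equation yields 2(θ g*(λ) - φ_S(λ)) w*(λ) - θ g*(2λ) w*(2λ) = -2(1-ρ), where ρ = λE[S] < 1, w*(λ) = E[e^{-λW}], w*(2λ) = E[e^{-2λW}]. -/
open Filter Set

/-- Letting `s → 0` in the stationary functional equation of the M/G/1 queue with
FGM dependence yields `2(θg*(λ) - φ_S(λ))w*(λ) - θg*(2λ)w*(2λ) = -2(1-ρ)`,
where `ρ = λE[S] < 1`, using `φ_S(0) = 1`, `φ_S'(0) = -E[S]`, `g*(0) = 0` and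
`w*(s) → 1` as `s → 0⁺`. -/
theorem functional_equation_limit_at_zero (l θ ES ρ : ℝ) (hl : 0 < l)
    (hθ : -1 ≤ θ ∧ θ ≤ 1)
    (φS gstar wst : ℝ → ℝ)
    (hφdiff : DifferentiableAt ℝ φS 0) (hgdiff : DifferentiableAt ℝ gstar 0)
    (hφ0 : φS 0 = 1) (hφ' : deriv φS 0 = -ES) (hg0 : gstar 0 = 0)
    (hρ : ρ = l * ES) (hρlt : ρ < 1)
    (hw1 : Tendsto wst (nhdsWithin 0 (Ioi 0)) (nhds 1))
    (heq : ∀ s : ℝ, 0 < s → s < l →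
      wst s * (1 - l / (l - s) * φS s + θ * s * l * gstar s / ((l - s) * (2 * l - s)))
        = s * ((θ * gstar l - φS l) / (l - s) * wst l
            - θ * gstar (2 * l) / (2 * l - s) * wst (2 * l))) :
    2 * (θ * gstar l - φS l) * wst l - θ * gstar (2 * l) * wst (2 * l)
      = -2 * (1 - ρ) := by
  have hl0 : l ≠ 0 := ne_of_gt hl
  set G : ℝ → ℝ := fun s =>
    1 - l / (l - s) * φS s + θ * s * l * gstar s / ((l - s) * (2 * l - s)) with hGdef
  set r : ℝ → ℝ := fun s =>
    (θ * gstar l - φS l) / (l - s) * wst l - θ * gstar (2 * l) / (2 * l - s) * wst (2 * l)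
    with hrdef
  have hG0 : G 0 = 0 := by
    simp [hGdef, hφ0, hg0, hl0]
  -- derivative of G at 0
  have hφd : HasDerivAt φS (-ES) 0 := hφ' ▸ hφdiff.hasDerivAt
  have hgd : HasDerivAt gstar (deriv gstar 0) 0 := hgdiff.hasDerivAt
  have hden : HasDerivAt (fun s : ℝ => l - s) (-1) 0 := by
    exact (hasDerivAt_id' 0).const_sub l
  have hden0 : (fun s : ℝ => l - s) 0 ≠ 0 := by simpa using hl0
  have hf : HasDerivAt (fun s : ℝ => l / (l - s)) ((0 * (l - 0) - l * -1) / (l - 0) ^ 2) 0 :=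
    (hasDerivAt_const 0 l).div hden hden0
  have hfφ : HasDerivAt (fun s : ℝ => l / (l - s) * φS s)
      (((0 * (l - 0) - l * -1) / (l - 0) ^ 2) * φS 0 + (l / (l - 0)) * (-ES)) 0 := hf.mul hφd
  have hu : HasDerivAt (fun s : ℝ => θ * s * l * gstar s)
      ((θ * 1 * l) * gstar 0 + (θ * 0 * l) * deriv gstar 0) 0 := by
    have h1 : HasDerivAt (fun s : ℝ => θ * s * l) (θ * 1 * l) 0 :=
      (((hasDerivAt_id 0).const_mul θ).mul_const l)
    exact h1.mul hgd
  have hD : HasDerivAt (fun s : ℝ => (l - s) * (2 * l - s))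
      ((-1) * (2 * l - 0) + (l - 0) * (-1)) 0 := by
    have h2 : HasDerivAt (fun s : ℝ => 2 * l - s) (-1) 0 := by
      exact (hasDerivAt_id' 0).const_sub (2 * l)
    exact hden.mul h2
  have hD0 : (fun s : ℝ => (l - s) * (2 * l - s)) 0 ≠ 0 := by
    show (l - 0) * (2 * l - 0) ≠ 0
    have : (0:ℝ) < (l - 0) * (2 * l - 0) := by nlinarith
    exact ne_of_gt this
  have ht : HasDerivAt (fun s : ℝ => θ * s * l * gstar s / ((l - s) * (2 * l - s)))
      ((((θ * 1 * l) * gstar 0 + (θ * 0 * l) * deriv gstar 0) * ((l - 0) * (2 * l - 0))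
          - (θ * 0 * l * gstar 0) * ((-1) * (2 * l - 0) + (l - 0) * (-1)))
        / ((l - 0) * (2 * l - 0)) ^ 2) 0 := hu.div hD hD0
  have hGd : HasDerivAt G ((ρ - 1) / l) 0 := by
    have h := ((hasDerivAt_const 0 (1 : ℝ)).sub hfφ).add ht
    refine h.congr_deriv ?_
    rw [hφ0, hg0, hρ]
    field_simp
    ring
  -- limit of G s / s as s → 0⁺
  have hslope : Tendsto (fun s : ℝ => G s / s) (nhdsWithin 0 (Ioi 0)) (nhds ((ρ - 1) / l)) := by
    have h := (hasDerivAt_iff_tendsto_slope.mp hGd).mono_left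
      (nhdsWithin_mono 0 (fun x hx => ne_of_gt hx))
    refine h.congr' ?_
    filter_upwards [self_mem_nhdsWithin] with s hs
    simp [slope_def_field, hG0, div_eq_inv_mul]
  have hLHS : Tendsto (fun s : ℝ => wst s * (G s / s)) (nhdsWithin 0 (Ioi 0))
      (nhds (1 * ((ρ - 1) / l))) := hw1.mul hslope
  -- limit of r as s → 0⁺
  have hr : Tendsto r (nhdsWithin 0 (Ioi 0))
      (nhds ((θ * gstar l - φS l) / (l - 0) * wst l
        - θ * gstar (2 * l) / (2 * l - 0) * wst (2 * l))) := by
    apply Tendsto.mono_left _ nhdsWithin_le_nhds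
    apply Tendsto.sub
    · exact ((tendsto_const_nhds.div
        (tendsto_const_nhds.sub tendsto_id) (by simpa using hl0)).mul_const _)
    · have h2 : (2 * l - 0 : ℝ) ≠ 0 := by
        have : (0:ℝ) < 2 * l - 0 := by linarith
        exact ne_of_gt this
      exact ((tendsto_const_nhds.div
        (tendsto_const_nhds.sub tendsto_id) h2).mul_const _)
  -- the two functions agree eventually on (0, l)
  have hee : (fun s : ℝ => wst s * (G s / s)) =ᶠ[nhdsWithin 0 (Ioi 0)] r := by
    have hmem : Ioo (0 : ℝ) l ∈ nhdsWithin (0 : ℝ) (Ioi 0) := by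
      rw [mem_nhdsWithin]
      exact ⟨Iio l, isOpen_Iio, hl, by intro x hx; exact ⟨hx.2, hx.1⟩⟩
    filter_upwards [hmem] with s hs
    have hs0 : s ≠ 0 := ne_of_gt hs.1
    have h := heq s hs.1 hs.2
    have : wst s * G s = s * r s := h
    field_simp at this ⊢
    linarith [this]
  have hkey : 1 * ((ρ - 1) / l)
      = (θ * gstar l - φS l) / (l - 0) * wst l
        - θ * gstar (2 * l) / (2 * l - 0) * wst (2 * l) :=
    tendsto_nhds_unique (hLHS.congr' hee) hr
  rw [sub_zero, sub_zero] at hkey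
  field_simp at hkey
  have h2 : (2 * (θ * gstar l - φS l) * wst l - θ * gstar (2 * l) * wst (2 * l))
        * (l * (2 * l) * l)
      = (-2 * (1 - ρ)) * (l * (2 * l) * l) := by
    rw [mul_comm l 2] at hkey
    linear_combination (-2 * l ^ 3) * hkey
  exact mul_right_cancel₀
    (mul_ne_zero (mul_ne_zero hl0 (mul_ne_zero two_ne_zero hl0)) hl0) h2
end

section
/- For the M/G/1 queue with FGM-dependent S and A ~ Exp(λ), the LST of the stationary minimum adjacent overlap time V satisfies E[e^{-sV}] = E[e^{-sW}]·[ 2 + (s/(λ-s))φ_S(λ) - (λ/(λ-s))φ_S(s) + θs( λg*(s)/((2λ-s)(λ-s)) + g*(2λ)/(2λ-s) - g*(λ)/(λ-s) ) ], for 0 < s < λ, given E[e^{-sV}] = E[e^{-sW}][1 + P(S>A) - E[e^{-s(S-A)}1{S>A}]]. -/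
/-- For the M/G/1 queue with FGM-dependent `S` and `A ~ Exp(λ)`, given
`E[e^{-sV}] = E[e^{-sW}][1 + P(S>A) - E[e^{-s(S-A)}1{S>A}]]` together with the
explicit expressions for `P(S>A)` and `E[e^{-s(S-A)}1{S>A}]`, the LST of the
stationary minimum adjacent overlap time `V` satisfies, for `0 < s < λ`:
`E[e^{-sV}] = E[e^{-sW}]·[2 + (s/(λ-s))φ_S(λ) - (λ/(λ-s))φ_S(s)
  + θs(λg*(s)/((2λ-s)(λ-s)) + g*(2λ)/(2λ-s) - g*(λ)/(λ-s))]`. -/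
theorem lst_min_overlap_mg1_fgm (l θ : ℝ) (hl : 0 < l) (hθ : -1 ≤ θ ∧ θ ≤ 1)
    (φS gstar vst wst q : ℝ → ℝ) (PSA : ℝ)
    (hP : PSA = 1 - φS l + θ * (gstar l - gstar (2 * l)))
    (hq : ∀ s : ℝ, 0 < s → s < l →
      q s = l / (l - s) * (φS s - φS l)
        + θ * (l / (l - s) * gstar l - 2 * l / (2 * l - s) * gstar (2 * l)
            - s * l * gstar s / ((l - s) * (2 * l - s))))
    (hv : ∀ s : ℝ, 0 < s → s < l → vst s = wst s * (1 + PSA - q s)) :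
    ∀ s : ℝ, 0 < s → s < l →
      vst s = wst s * (2 + s / (l - s) * φS l - l / (l - s) * φS s
        + θ * s * (l * gstar s / ((2 * l - s) * (l - s))
            + gstar (2 * l) / (2 * l - s) - gstar l / (l - s))) := by
  intro s hs hsl
  have h1 : l - s ≠ 0 := by linarith
  have h2 : 2 * l - s ≠ 0 := by linarith
  rw [hv s hs hsl, hq s hs hsl, hP]
  field_simp
  ring
end
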